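/- Let T be an invertible generalized hyperbolic operator on a complex Banach space X. Then there exist ε > 0 and a constant C > 0, independent of p, with the following property: for every p ∈ ℕ there is an assignment 𝓛 = (L₁,…,L_p) ↦ h_𝓛, defined on all p-tuples of bounded Lipschitz maps L_j : X → X with Lip(L_j) < ε, such that each h_𝓛 : X → X is a homeomorphism with (T+L₁)∘⋯∘(T+L_p) = h_𝓛 ∘ T^p ∘ h_𝓛⁻¹ and sup_{x∈X} ‖h_𝓛(x) − x‖ < ∞, and such that for any two such p-tuples 𝓛 = (L₁,…,L_p) and 𝓛' = (L'₁,…,L'_p) one has sup_{x∈X} ‖h_𝓛(x) − h_{𝓛'}(x)‖ ≤ C · max_{1≤j≤p} ‖L_j − L'_j‖_∞. -/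

import Mathlib

noncomputable section

/-- Restriction of a continuous linear map to an invariant subspace. -/
def restrictOp {𝕜 X : Type*} [NontriviallyNormedField 𝕜] [NormedAddCommGroup X]
    [NormedSpace 𝕜 X] (T : X →L[𝕜] X) (M : Submodule 𝕜 X)
    (hM : ∀ x ∈ M, T x ∈ M) : M →L[𝕜] M :=
  (T.comp M.subtypeL).codRestrict M fun x => hM x x.2

/-- `T` is an (invertible) generalized hyperbolic operator: there are closed subspaces
`M`, `N` with `X = M ⊕ N` (topological direct sum), `T(M) ⊆ M` with `σ(T|_M) ⊆ 𝔻`, and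
`T⁻¹(N) ⊆ N` with `σ(T⁻¹|_N) ⊆ 𝔻`. -/
def IsGenHyperbolic {X : Type*} [NormedAddCommGroup X] [NormedSpace ℂ X]
    (T : X ≃L[ℂ] X) : Prop :=
  ∃ (M N : Submodule ℂ X), IsClosed (M : Set X) ∧ IsClosed (N : Set X) ∧
    IsCompl M N ∧
    ∃ (hM : ∀ x ∈ M, T x ∈ M) (hN : ∀ x ∈ N, T.symm x ∈ N),
      spectrum ℂ (restrictOp (T : X →L[ℂ] X) M hM) ⊆ Metric.ball (0 : ℂ) 1 ∧
      spectrum ℂ (restrictOp (T.symm : X →L[ℂ] X) N hN) ⊆ Metric.ball (0 : ℂ) 1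

/-- The sup-norm of the map `F` is finite, i.e. `F` is a bounded map. -/
def BoundedMap {X Y : Type*} [Norm Y] (F : X → Y) : Prop :=
  ∃ C, ∀ x, ‖F x‖ ≤ C

/-- `‖F‖_∞ < ε`. -/
def SupNormLt {X Y : Type*} [Norm Y] (F : X → Y) (ε : ℝ) : Prop :=
  ∃ c, c < ε ∧ ∀ x, ‖F x‖ ≤ c

/-- `Lip(F) < ε`: `F` is Lipschitz with some constant `< ε`. -/
def LipLt {X Y : Type*} [PseudoEMetricSpace X] [PseudoEMetricSpace Y]
    (F : X → Y) (ε : ℝ) : Prop :=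
  ∃ c : NNReal, (c : ℝ) < ε ∧ LipschitzWith c F

/-- The composition `S 0 ∘ S 1 ∘ ⋯ ∘ S (p-1)`. -/
def CompFamily {X : Type*} (p : ℕ) (S : Fin p → X → X) : X → X :=
  (List.ofFn S).foldr (· ∘ ·) id

/-!
A generalized hyperbolic `T` has a bounded `P` with `∑ ‖Tⁿ P‖ < ∞` and `∑ ‖T⁻ⁿ⁻¹ (1 - P)‖ < ∞`
(Gelfand's formula on `M` and `N`). For a periodic family of homeomorphisms `G_j`, the operator
`g ↦ (T ∘ g_{j+1} ∘ G_j⁻¹)_j` on families of bounded continuous maps is then hyperbolic in the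
same sense, so a Neumann series split along `P` gives a right inverse of `1 - ·` whose norm is
bounded independently of `G` and of the period. The conjugacy `H_j = id + h_j` with
`(T + L_j) ∘ H_{j+1} = H_j ∘ (T + L'_j)` is the fixed point of a contraction built from this
inverse. Composing the solutions for `(L, L')` and `(L', L)` gives a fixed point for `(L, L)`,
as does the identity, so the two agree; with `L' = 0` this makes `H` a homeomorphism.
Lipschitz dependence on `L` is the continuity of fixed points of uniform contractions.
-/

open scoped NNReal
open Filter BoundedContinuousFunction

section SplitNeumannSeries

variable {R : Type*} [NormedRing R]

/-- When `u * u' = 1`: the Neumann series of `(1 - u)⁻¹` along `e`, and of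
`(1 - u)⁻¹ = -u' (1 - u')⁻¹` along `1 - e`. -/
def splitNeumannSeries (u u' e : R) : R :=
  ∑' n, u ^ n * e - ∑' n, u' ^ (n + 1) * (1 - e)

variable {u u' e : R}

theorem one_sub_mul_splitNeumannSeries (huu' : u * u' = 1)
    (hs : Summable fun n => u ^ n * e) (hu : Summable fun n => u' ^ (n + 1) * (1 - e)) :
    (1 - u) * splitNeumannSeries u u' e = 1 := by
  have hstable : u * ∑' n, u ^ n * e = ∑' n, u ^ n * e - e := by
    rw [← hs.tsum_mul_left, hs.tsum_eq_zero_add]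
    simp [pow_succ', mul_assoc]
  have hunstable :
      u * ∑' n, u' ^ (n + 1) * (1 - e) = (1 - e) + ∑' n, u' ^ (n + 1) * (1 - e) := by
    have hpow : ∀ n, u * (u' ^ (n + 1) * (1 - e)) = u' ^ n * (1 - e) := fun n => by
      rw [pow_succ', mul_assoc, ← mul_assoc u, huu', one_mul]
    rw [← hu.tsum_mul_left, tsum_congr hpow,
      ((summable_nat_add_iff (f := fun n => u' ^ n * (1 - e)) 1).mp hu).tsum_eq_zero_add,
      pow_zero, one_mul]
  rw [splitNeumannSeries, sub_mul 1 u, one_mul, mul_sub u, hstable, hunstable]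
  abel

theorem norm_splitNeumannSeries_le {α β : ℕ → ℝ} (hα : Summable α) (hβ : Summable β)
    (hs : ∀ n, ‖u ^ n * e‖ ≤ α n) (hu : ∀ n, ‖u' ^ (n + 1) * (1 - e)‖ ≤ β n) :
    ‖splitNeumannSeries u u' e‖ ≤ ∑' n, α n + ∑' n, β n :=
  (norm_sub_le _ _).trans
    (add_le_add (tsum_of_norm_bounded hα.hasSum hs) (tsum_of_norm_bounded hβ.hasSum hu))

theorem mul_splitNeumannSeries_eq {v v' r : R}
    (hs : Summable fun n => u ^ n * e) (hu : Summable fun n => u' ^ (n + 1) * (1 - e))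
    (hs' : Summable fun n => v ^ n * e) (hu' : Summable fun n => v' ^ (n + 1) * (1 - e))
    (hr : r * u = v * r) (hr' : r * u' = v' * r) (hre : Commute r e) :
    r * splitNeumannSeries u u' e = splitNeumannSeries v v' e * r := by
  have hre' : Commute r (1 - e) := (Commute.one_right r).sub_right hre
  have hrn (n : ℕ) : r * u ^ n = v ^ n * r := SemiconjBy.pow_right hr n
  have hrn' (n : ℕ) : r * u' ^ n = v' ^ n * r := SemiconjBy.pow_right hr' n
  rw [splitNeumannSeries, splitNeumannSeries, mul_sub, sub_mul, ← hs.tsum_mul_left,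
    ← hu.tsum_mul_left, ← hs'.tsum_mul_right, ← hu'.tsum_mul_right]
  congr 1 <;> refine tsum_congr fun n => ?_
  · rw [← mul_assoc, hrn, mul_assoc, hre.eq, mul_assoc]
  · rw [← mul_assoc, hrn', mul_assoc, hre'.eq, mul_assoc]

end SplitNeumannSeries

theorem summable_norm_pow_of_spectralRadius_lt_one {A : Type*} [NormedRing A]
    [NormedAlgebra ℂ A] [CompleteSpace A] {a : A} (h : spectralRadius ℂ a < 1) :
    Summable fun n => ‖a ^ n‖ := by
  obtain ⟨c, hρc, hc1⟩ := ENNReal.lt_iff_exists_nnreal_btwn.mp h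
  refine .of_norm_bounded_eventually_nat
    (summable_geometric_of_lt_one c.2 (by exact_mod_cast hc1)) ?_
  filter_upwards [(spectrum.gelfand_formula a).eventually_lt_const hρc, eventually_gt_atTop 0]
    with n hn hn0
  rw [one_div, ENNReal.rpow_inv_lt_iff (by positivity), ENNReal.rpow_natCast] at hn
  rw [norm_norm]
  exact_mod_cast hn.le

theorem summable_norm_pow_of_spectrum_subset_ball {A : Type*} [NormedRing A]
    [NormedAlgebra ℂ A] [CompleteSpace A] {a : A} (h : spectrum ℂ a ⊆ Metric.ball 0 1) :
    Summable fun n => ‖a ^ n‖ := by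
  nontriviality A
  refine summable_norm_pow_of_spectralRadius_lt_one
    (spectrum.spectralRadius_lt_of_forall_lt a fun z hz => ?_)
  have hz1 := h hz
  rw [Metric.mem_ball, dist_zero_right] at hz1
  exact_mod_cast hz1

theorem restrictOp_pow_apply {𝕜 X : Type*} [NontriviallyNormedField 𝕜] [NormedAddCommGroup X]
    [NormedSpace 𝕜 X] (S : X →L[𝕜] X) (M : Submodule 𝕜 X) (hM : ∀ x ∈ M, S x ∈ M) (n : ℕ)
    (y : M) : ((restrictOp S M hM ^ n) y : X) = (S ^ n) y := by
  induction n generalizing y with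
  | zero => rfl
  | succ n ih => rw [pow_succ, pow_succ]; exact ih (restrictOp S M hM y)

theorem summable_norm_pow_mul_subtypeL_comp {X : Type*} [NormedAddCommGroup X]
    [NormedSpace ℂ X] [CompleteSpace X] (S : X →L[ℂ] X) {M : Submodule ℂ X}
    (hMc : IsClosed (M : Set X)) (hM : ∀ x ∈ M, S x ∈ M)
    (hσ : spectrum ℂ (restrictOp S M hM) ⊆ Metric.ball 0 1)
    (Q : X →L[ℂ] M) : Summable fun n => ‖S ^ n * (M.subtypeL ∘L Q)‖ := by
  have : CompleteSpace M := hMc.completeSpace_coe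
  have hR := summable_norm_pow_of_spectrum_subset_ball (A := M →L[ℂ] M) hσ
  refine .of_nonneg_of_le (fun _ => norm_nonneg _) (fun n => ?_) (hR.mul_right ‖Q‖)
  refine ContinuousLinearMap.opNorm_le_bound _ (by positivity) fun x => ?_
  have hx : (S ^ n * (M.subtypeL ∘L Q)) x = ((restrictOp S M hM ^ n) (Q x) : X) :=
    (restrictOp_pow_apply S M hM n (Q x)).symm
  rw [hx, mul_assoc]
  exact (restrictOp S M hM ^ n).le_opNorm_of_le (Q.le_opNorm x)

/-- `P` need not commute with `T`: for a generalized hyperbolic `T` only `T⁻¹(N) ⊆ N` is known,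
not `T(N) ⊆ N`. -/
structure SummableDichotomy {𝕜 X : Type*} [NontriviallyNormedField 𝕜] [NormedAddCommGroup X]
    [NormedSpace 𝕜 X] (T : X ≃L[𝕜] X) where
  P : X →L[𝕜] X
  summable_stable : Summable fun n => ‖(T : X →L[𝕜] X) ^ n * P‖
  summable_unstable : Summable fun n => ‖(T.symm : X →L[𝕜] X) ^ (n + 1) * (1 - P)‖

namespace SummableDichotomy

variable {𝕜 X : Type*} [NontriviallyNormedField 𝕜] [NormedAddCommGroup X] [NormedSpace 𝕜 X]
  {T : X ≃L[𝕜] X} (d : SummableDichotomy T)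

def bound : ℝ≥0 :=
  ⟨∑' n, ‖(T : X →L[𝕜] X) ^ n * d.P‖ + ∑' n, ‖(T.symm : X →L[𝕜] X) ^ (n + 1) * (1 - d.P)‖,
    by positivity⟩

theorem exists_small_lipschitz_bound :
    ∃ K : ℝ≥0, 0 < K ∧ K * ‖(T.symm : X →L[𝕜] X)‖₊ < 1 ∧ d.bound * K ≤ 2⁻¹ := by
  set a := d.bound + ‖(T.symm : X →L[𝕜] X)‖₊ + 1
  have ha : 0 < a := by positivity
  have haK : a * (2 * a)⁻¹ = 2⁻¹ := by field_simp
  refine ⟨(2 * a)⁻¹, by positivity, ?_, ?_⟩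
  · calc (2 * a)⁻¹ * ‖(T.symm : X →L[𝕜] X)‖₊ ≤ (2 * a)⁻¹ * a := by
          gcongr; simp only [a]; exact le_add_right le_add_self
      _ < 1 := by rw [mul_comm, haK]; norm_num
  · calc d.bound * (2 * a)⁻¹ ≤ a * (2 * a)⁻¹ := by
          gcongr; simp only [a, add_assoc]; exact le_self_add
      _ = 2⁻¹ := haK

end SummableDichotomy

theorem IsGenHyperbolic.nonempty_summableDichotomy {X : Type*} [NormedAddCommGroup X]
    [NormedSpace ℂ X] [CompleteSpace X] {T : X ≃L[ℂ] X} (hT : IsGenHyperbolic T) :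
    Nonempty (SummableDichotomy T) := by
  obtain ⟨M, N, hMc, hNc, hMN, hM, hN, hσM, hσN⟩ := hT
  have hMN' := Submodule.IsCompl.isTopCompl_of_isClosed hMN hMc hNc
  refine ⟨⟨M.projectionL N hMN', ?_, ?_⟩⟩
  · exact summable_norm_pow_mul_subtypeL_comp _ hMc hM hσM _
  · rw [ContinuousLinearMap.one_def, ← Submodule.projectionL_eq_id_sub_projectionL]
    exact (summable_nat_add_iff 1).mpr (summable_norm_pow_mul_subtypeL_comp _ hNc hN hσN _)

section FamilyOperators

variable {𝕜 X ι : Type*} [NontriviallyNormedField 𝕜] [NormedAddCommGroup X] [NormedSpace 𝕜 X]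

variable (ι) in
def postOp : (X →L[𝕜] X) →+* ((ι → X →ᵇ X) →L[𝕜] (ι → X →ᵇ X)) where
  toFun A := ContinuousLinearMap.piMap fun _ => A.compLeftContinuousBounded X
  map_one' := by ext; rfl
  map_mul' _ _ := by ext; rfl
  map_zero' := by ext; rfl
  map_add' _ _ := by ext; rfl

@[simp]
theorem postOp_apply (A : X →L[𝕜] X) (g : ι → X →ᵇ X) (j : ι) (x : X) :
    postOp ι A g j x = A (g j x) := rfl

theorem norm_postOp_le [Fintype ι] (A : X →L[𝕜] X) : ‖postOp ι A‖ ≤ ‖A‖ := by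
  refine ContinuousLinearMap.opNorm_le_bound _ (norm_nonneg A) fun g => ?_
  refine (pi_norm_le_iff_of_nonneg (by positivity)).mpr fun j => ?_
  refine (norm_le (by positivity)).mpr fun x => ?_
  exact A.le_opNorm_of_le (((g j).norm_coe_le_norm x).trans (norm_le_pi_norm g j))

variable (𝕜) in
def compOp (τ : ι → ι) (c : ι → C(X, X)) : (ι → X →ᵇ X) →L[𝕜] (ι → X →ᵇ X) :=
  ContinuousLinearMap.pi fun j =>
    (compContinuousCLM X 𝕜 (c j)).comp (ContinuousLinearMap.proj (τ j))

@[simp]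
theorem compOp_apply (τ : ι → ι) (c : ι → C(X, X)) (g : ι → X →ᵇ X) (j : ι) (x : X) :
    compOp 𝕜 τ c g j x = g (τ j) (c j x) := rfl

theorem norm_compOp_pow_le_one [Fintype ι] (τ : ι → ι) (c : ι → C(X, X)) (n : ℕ) :
    ‖compOp 𝕜 τ c ^ n‖ ≤ 1 := by
  have hc : ‖compOp 𝕜 τ c‖ ≤ 1 := by
    refine ContinuousLinearMap.opNorm_le_bound _ zero_le_one fun g => ?_
    refine (pi_norm_le_iff_of_nonneg (by positivity)).mpr fun j => ?_
    exact ((g (τ j)).norm_compContinuous_le (c j)).trans (by simpa using norm_le_pi_norm g (τ j))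
  induction n with
  | zero => exact ContinuousLinearMap.norm_id_le
  | succ n ih =>
    rw [pow_succ]
    exact (norm_mul_le _ _).trans (mul_le_one₀ ih (norm_nonneg _) hc)

theorem commute_postOp_compOp (A : X →L[𝕜] X) (τ : ι → ι) (c : ι → C(X, X)) :
    Commute (postOp ι A) (compOp 𝕜 τ c) := by
  ext; rfl

theorem norm_postOp_mul_compOp_pow_mul_postOp_le [Fintype ι] (A B : X →L[𝕜] X) (τ : ι → ι)
    (c : ι → C(X, X)) (n : ℕ) :
    ‖(postOp ι A * compOp 𝕜 τ c) ^ n * postOp ι B‖ ≤ ‖A ^ n * B‖ := by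
  rw [(commute_postOp_compOp A τ c).mul_pow, mul_assoc,
    ((commute_postOp_compOp B τ c).pow_right n).eq.symm, ← mul_assoc, ← map_pow, ← map_mul]
  calc ‖postOp ι (A ^ n * B) * compOp 𝕜 τ c ^ n‖
      ≤ ‖postOp ι (A ^ n * B)‖ * ‖compOp 𝕜 τ c ^ n‖ := norm_mul_le _ _
    _ ≤ ‖A ^ n * B‖ * 1 :=
      mul_le_mul (norm_postOp_le _) (norm_compOp_pow_le_one τ c n) (norm_nonneg _) (norm_nonneg _)
    _ = ‖A ^ n * B‖ := mul_one _

end FamilyOperators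

section GreenOperator

variable {𝕜 X ι : Type*} [NontriviallyNormedField 𝕜] [NormedAddCommGroup X] [NormedSpace 𝕜 X]

def transferOp (T : X ≃L[𝕜] X) (σ : Equiv.Perm ι) (G : ι → X ≃ₜ X) :
    (ι → X →ᵇ X) →L[𝕜] (ι → X →ᵇ X) :=
  postOp ι (T : X →L[𝕜] X) * compOp 𝕜 σ fun j => ((G j).symm : C(X, X))

def transferOpInv (T : X ≃L[𝕜] X) (σ : Equiv.Perm ι) (G : ι → X ≃ₜ X) :
    (ι → X →ᵇ X) →L[𝕜] (ι → X →ᵇ X) :=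
  postOp ι (T.symm : X →L[𝕜] X) * compOp 𝕜 σ.symm fun j => (G (σ.symm j) : C(X, X))

@[simp]
theorem transferOp_apply (T : X ≃L[𝕜] X) (σ : Equiv.Perm ι) (G : ι → X ≃ₜ X)
    (g : ι → X →ᵇ X) (j : ι) (x : X) : transferOp T σ G g j x = T (g (σ j) ((G j).symm x)) :=
  rfl

theorem transferOp_mul_transferOpInv (T : X ≃L[𝕜] X) (σ : Equiv.Perm ι) (G : ι → X ≃ₜ X) :
    transferOp T σ G * transferOpInv T σ G = 1 := by
  ext g j x
  simp [transferOp, transferOpInv]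

variable [Fintype ι] {T : X ≃L[𝕜] X} (d : SummableDichotomy T) (σ : Equiv.Perm ι)

def greenOp (G : ι → X ≃ₜ X) : (ι → X →ᵇ X) →L[𝕜] (ι → X →ᵇ X) :=
  splitNeumannSeries (transferOp T σ G) (transferOpInv T σ G) (postOp ι d.P)

theorem norm_transferOp_pow_mul_le (G : ι → X ≃ₜ X) (n : ℕ) :
    ‖transferOp T σ G ^ n * postOp ι d.P‖ ≤ ‖(T : X →L[𝕜] X) ^ n * d.P‖ :=
  norm_postOp_mul_compOp_pow_mul_postOp_le _ _ _ _ n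

theorem norm_transferOpInv_pow_mul_le (G : ι → X ≃ₜ X) (n : ℕ) :
    ‖transferOpInv T σ G ^ (n + 1) * (1 - postOp ι d.P)‖ ≤
      ‖(T.symm : X →L[𝕜] X) ^ (n + 1) * (1 - d.P)‖ := by
  rw [← map_one (postOp ι), ← map_sub]
  exact norm_postOp_mul_compOp_pow_mul_postOp_le _ _ _ _ (n + 1)

theorem norm_greenOp_le (G : ι → X ≃ₜ X) : ‖greenOp d σ G‖ ≤ d.bound :=
  norm_splitNeumannSeries_le d.summable_stable d.summable_unstable
    (norm_transferOp_pow_mul_le d σ G) (norm_transferOpInv_pow_mul_le d σ G)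

variable [CompleteSpace X]

theorem summable_transferOp_pow_mul (G : ι → X ≃ₜ X) :
    Summable fun n => transferOp T σ G ^ n * postOp ι d.P :=
  .of_norm_bounded d.summable_stable (norm_transferOp_pow_mul_le d σ G)

theorem summable_transferOpInv_pow_mul (G : ι → X ≃ₜ X) :
    Summable fun n => transferOpInv T σ G ^ (n + 1) * (1 - postOp ι d.P) :=
  .of_norm_bounded d.summable_unstable (norm_transferOpInv_pow_mul_le d σ G)

theorem one_sub_transferOp_mul_greenOp (G : ι → X ≃ₜ X) :
    (1 - transferOp T σ G) * greenOp d σ G = 1 :=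
  one_sub_mul_splitNeumannSeries (transferOp_mul_transferOpInv T σ G)
    (summable_transferOp_pow_mul d σ G) (summable_transferOpInv_pow_mul d σ G)

theorem compOp_mul_greenOp {G G' : ι → X ≃ₜ X} (H : ι → C(X, X))
    (hH : ∀ j x, G' j (H (σ j) x) = H j (G j x)) :
    compOp 𝕜 id H * greenOp d σ G' = greenOp d σ G * compOp 𝕜 id H := by
  have hH' : ∀ j x, (G' j).symm (H j x) = H (σ j) ((G j).symm x) := fun j x => by
    rw [(G' j).symm_apply_eq, hH, Homeomorph.apply_symm_apply]
  refine mul_splitNeumannSeries_eq (summable_transferOp_pow_mul d σ G')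
    (summable_transferOpInv_pow_mul d σ G') (summable_transferOp_pow_mul d σ G)
    (summable_transferOpInv_pow_mul d σ G) ?_ ?_ (commute_postOp_compOp _ _ _).symm
  · ext g j x
    simp [transferOp, hH']
  · ext g j x
    simp [transferOpInv, ← hH]

end GreenOperator

section Perturbation

variable {𝕜 X ι : Type*} [NontriviallyNormedField 𝕜] [NormedAddCommGroup X] [NormedSpace 𝕜 X]
  {K : ℝ≥0}

def perturbHomeomorph [CompleteSpace X] (T : X ≃L[𝕜] X) (L : X →ᵇ X) (hL : LipschitzWith K L)
    (hK : K * ‖(T.symm : X →L[𝕜] X)‖₊ < 1) : X ≃ₜ X :=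
  ApproximatesLinearOn.toHomeomorph (fun x => T x + L x) (f' := T)
    (LipschitzOnWith.approximatesLinearOn (by simpa [Pi.sub_def] using hL))
    (T.subsingleton_or_nnnorm_symm_pos.imp id fun hT => (NNReal.lt_inv_iff_mul_lt hT.ne').mpr hK)

@[simp]
theorem perturbHomeomorph_apply [CompleteSpace X] (T : X ≃L[𝕜] X) (L : X →ᵇ X)
    (hL : LipschitzWith K L) (hK : K * ‖(T.symm : X →L[𝕜] X)‖₊ < 1) (x : X) :
    perturbHomeomorph T L hL hK x = T x + L x := rfl

def idAdd (g : X →ᵇ X) : C(X, X) := ContinuousMap.id X + g.toContinuousMap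

@[simp]
theorem idAdd_apply (g : X →ᵇ X) (x : X) : idAdd g x = x + g x := rfl

theorem lipschitzWith_zero_apply : ∀ j, LipschitzWith K ((0 : ι → X →ᵇ X) j) :=
  fun _ => LipschitzWith.const' 0

variable (σ : Equiv.Perm ι)

/-- For `G = T + L` and `G' = T + L'`, the equation `G_j ∘ (id + h_{σ j}) = (id + h_j) ∘ G'_j`
reads `h = conjugacyDefect σ L L' G' h + transferOp T σ G' h`. -/
def conjugacyDefect (L L' : ι → X →ᵇ X) (G' : ι → X ≃ₜ X) (h : ι → X →ᵇ X) :
    ι → X →ᵇ X :=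
  fun j => ((L j).compContinuous (idAdd (h (σ j))) - L' j).compContinuous ((G' j).symm : C(X, X))

@[simp]
theorem conjugacyDefect_apply (L L' : ι → X →ᵇ X) (G' : ι → X ≃ₜ X) (h : ι → X →ᵇ X) (j : ι)
    (x : X) : conjugacyDefect σ L L' G' h j x =
      L j ((G' j).symm x + h (σ j) ((G' j).symm x)) - L' j ((G' j).symm x) := rfl

theorem conjugacyDefect_zero (L : ι → X →ᵇ X) (G : ι → X ≃ₜ X) :
    conjugacyDefect σ L L G 0 = 0 := by
  ext j x
  simp

theorem norm_conjugacyDefect_sub_le [Fintype ι] {L : ι → X →ᵇ X}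
    (hL : ∀ j, LipschitzWith K (L j)) (L' : ι → X →ᵇ X) (G' : ι → X ≃ₜ X) (h h' : ι → X →ᵇ X) :
    ‖conjugacyDefect σ L L' G' h - conjugacyDefect σ L L' G' h'‖ ≤ K * ‖h - h'‖ := by
  refine (pi_norm_le_iff_of_nonneg (by positivity)).mpr fun j => ?_
  refine (norm_le (by positivity)).mpr fun x => ?_
  set y := (G' j).symm x
  calc ‖L j (y + h (σ j) y) - L' j y - (L j (y + h' (σ j) y) - L' j y)‖
      = ‖L j (y + h (σ j) y) - L j (y + h' (σ j) y)‖ := by rw [sub_sub_sub_cancel_right]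
    _ ≤ K * ‖(y + h (σ j) y) - (y + h' (σ j) y)‖ := (hL j).norm_sub_le _ _
    _ = K * ‖(h - h') (σ j) y‖ := by rw [add_sub_add_left_eq_sub]; rfl
    _ ≤ K * ‖h - h'‖ := by
      gcongr
      exact ((h - h') (σ j)).norm_coe_le_norm y |>.trans (norm_le_pi_norm (h - h') (σ j))

theorem norm_conjugacyDefect_sub_conjugacyDefect_le [Fintype ι] (L₁ L₂ L' : ι → X →ᵇ X)
    (G' : ι → X ≃ₜ X) (h : ι → X →ᵇ X) :
    ‖conjugacyDefect σ L₁ L' G' h - conjugacyDefect σ L₂ L' G' h‖ ≤ ‖L₁ - L₂‖ := by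
  refine (pi_norm_le_iff_of_nonneg (norm_nonneg _)).mpr fun j => ?_
  refine (norm_le (norm_nonneg _)).mpr fun x => ?_
  set y := (G' j).symm x
  calc ‖L₁ j (y + h (σ j) y) - L' j y - (L₂ j (y + h (σ j) y) - L' j y)‖
      = ‖(L₁ - L₂) j (y + h (σ j) y)‖ := by rw [sub_sub_sub_cancel_right]; rfl
    _ ≤ ‖L₁ - L₂‖ := ((L₁ - L₂) j).norm_coe_le_norm _ |>.trans (norm_le_pi_norm (L₁ - L₂) j)

end Perturbation

section Conjugacy

variable {𝕜 X ι : Type*} [NontriviallyNormedField 𝕜] [NormedAddCommGroup X] [NormedSpace 𝕜 X]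
  [CompleteSpace X] [Fintype ι] {T : X ≃L[𝕜] X} (d : SummableDichotomy T) (σ : Equiv.Perm ι)
  {K : ℝ≥0} (hK : K * ‖(T.symm : X →L[𝕜] X)‖₊ < 1)

def perturbFamily (L : ι → X →ᵇ X) (hL : ∀ j, LipschitzWith K (L j)) : ι → X ≃ₜ X :=
  fun j => perturbHomeomorph T (L j) (hL j) hK

def conjugacyMap (L L' : ι → X →ᵇ X) (hL' : ∀ j, LipschitzWith K (L' j)) (h : ι → X →ᵇ X) :
    ι → X →ᵇ X :=
  greenOp d σ (perturbFamily hK L' hL') (conjugacyDefect σ L L' (perturbFamily hK L' hL') h)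

theorem contractingWith_conjugacyMap (hdK : d.bound * K < 1) {L : ι → X →ᵇ X}
    (hL : ∀ j, LipschitzWith K (L j)) {L' : ι → X →ᵇ X} (hL' : ∀ j, LipschitzWith K (L' j)) :
    ContractingWith (d.bound * K) (conjugacyMap d σ hK L L' hL') := by
  refine ⟨hdK, LipschitzWith.of_dist_le_mul fun h h' => ?_⟩
  rw [dist_eq_norm, dist_eq_norm, conjugacyMap, conjugacyMap, ← map_sub]
  calc _ ≤ ‖greenOp d σ (perturbFamily hK L' hL')‖ * ‖conjugacyDefect σ L L' _ h -
        conjugacyDefect σ L L' _ h'‖ := ContinuousLinearMap.le_opNorm _ _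
    _ ≤ d.bound * (K * ‖h - h'‖) :=
      mul_le_mul (norm_greenOp_le d σ _) (norm_conjugacyDefect_sub_le σ hL L' _ h h')
        (norm_nonneg _) d.bound.2
    _ = ↑(d.bound * K) * ‖h - h'‖ := by push_cast; ring

def conjugacyCorrection (hdK : d.bound * K < 1) {L : ι → X →ᵇ X} (hL : ∀ j, LipschitzWith K (L j))
    {L' : ι → X →ᵇ X} (hL' : ∀ j, LipschitzWith K (L' j)) : ι → X →ᵇ X :=
  ContractingWith.fixedPoint _ (contractingWith_conjugacyMap d σ hK hdK hL hL')

theorem perturbFamily_idAdd_conjugacyCorrection (hdK : d.bound * K < 1) {L : ι → X →ᵇ X}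
    (hL : ∀ j, LipschitzWith K (L j)) {L' : ι → X →ᵇ X} (hL' : ∀ j, LipschitzWith K (L' j))
    (j : ι) (x : X) :
    perturbFamily hK L hL j (idAdd (conjugacyCorrection d σ hK hdK hL hL' (σ j)) x) =
      idAdd (conjugacyCorrection d σ hK hdK hL hL' j) (perturbFamily hK L' hL' j x) := by
  set h := conjugacyCorrection d σ hK hdK hL hL'
  set G' := perturbFamily hK L' hL'
  have hfix : greenOp d σ G' (conjugacyDefect σ L L' G' h) = h :=
    (contractingWith_conjugacyMap d σ hK hdK hL hL').fixedPoint_isFixedPt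
  have hsolve : h - transferOp T σ G' h = conjugacyDefect σ L L' G' h := by
    have := congrArg (· (conjugacyDefect σ L L' G' h)) (one_sub_transferOp_mul_greenOp d σ G')
    simpa only [mul_apply_eq_comp, hfix, _root_.sub_apply, one_apply_eq_self] using this
  have hjx := congrArg (fun g => g j (G' j x)) hsolve
  simp only [Pi.sub_apply, BoundedContinuousFunction.sub_apply, transferOp_apply,
    conjugacyDefect_apply, Homeomorph.symm_apply_apply] at hjx
  simp only [G', perturbFamily, perturbHomeomorph_apply, idAdd_apply, map_add] at hjx ⊢
  rw [eq_add_of_sub_eq hjx]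
  abel

theorem idAdd_conjugacyCorrection_idAdd_conjugacyCorrection (hdK : d.bound * K < 1)
    {L : ι → X →ᵇ X} (hL : ∀ j, LipschitzWith K (L j)) {L' : ι → X →ᵇ X}
    (hL' : ∀ j, LipschitzWith K (L' j)) (j : ι) (x : X) :
    idAdd (conjugacyCorrection d σ hK hdK hL hL' j)
      (idAdd (conjugacyCorrection d σ hK hdK hL' hL j) x) = x := by
  set h := conjugacyCorrection d σ hK hdK hL hL'
  set h' := conjugacyCorrection d σ hK hdK hL' hL
  set G := perturbFamily hK L hL
  set G' := perturbFamily hK L' hL'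
  set H' := fun j => idAdd (h' j)
  have hH' : ∀ j x, G' j (H' (σ j) x) = H' j (G j x) :=
    perturbFamily_idAdd_conjugacyCorrection d σ hK hdK hL' hL
  have hH'symm : ∀ j x, (G' j).symm (H' j x) = H' (σ j) ((G j).symm x) := fun j x => by
    rw [(G' j).symm_apply_eq, hH', Homeomorph.apply_symm_apply]
  -- `u` is the correction of `H ∘ H'`; it solves the equation of the pair `(L, L)`, as does `0`.
  set u := compOp 𝕜 id H' h + h'
  have hdefect : compOp 𝕜 id H' (conjugacyDefect σ L L' G' h) + conjugacyDefect σ L' L G h' =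
      conjugacyDefect σ L L G u := by
    ext j x
    simp only [Pi.add_apply, BoundedContinuousFunction.add_apply, compOp_apply,
      conjugacyDefect_apply, id]
    rw [hH'symm]
    simp only [u, H', idAdd_apply, Pi.add_apply, BoundedContinuousFunction.add_apply,
      compOp_apply, id]
    rw [add_comm (h (σ j) _), ← add_assoc]
    abel
  have hfix : conjugacyMap d σ hK L L hL u = u := by
    rw [conjugacyMap, ← hdefect, map_add, ← mul_apply_eq_comp (greenOp d σ G),
      ← compOp_mul_greenOp d σ H' hH', mul_apply_eq_comp]
    congr 2
    · exact (contractingWith_conjugacyMap d σ hK hdK hL hL').fixedPoint_isFixedPt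
    · exact (contractingWith_conjugacyMap d σ hK hdK hL' hL).fixedPoint_isFixedPt
  have hzero : conjugacyMap d σ hK L L hL 0 = 0 := by
    rw [conjugacyMap, conjugacyDefect_zero, map_zero]
  have hu : u = 0 := (contractingWith_conjugacyMap d σ hK hdK hL hL).fixedPoint_unique' hfix hzero
  have hujx := congrArg (fun g => g j x) hu
  simp only [u, Pi.add_apply, BoundedContinuousFunction.add_apply, compOp_apply, H', idAdd_apply,
    id, Pi.zero_apply, BoundedContinuousFunction.coe_zero] at hujx
  simp only [idAdd_apply]
  rw [add_assoc, add_comm (h' j x), hujx, add_zero]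

theorem norm_conjugacyCorrection_sub_le (hdK : d.bound * K < 1) {L₁ L₂ L' : ι → X →ᵇ X}
    (hL₁ : ∀ j, LipschitzWith K (L₁ j)) (hL₂ : ∀ j, LipschitzWith K (L₂ j))
    (hL' : ∀ j, LipschitzWith K (L' j)) :
    ‖conjugacyCorrection d σ hK hdK hL₁ hL' - conjugacyCorrection d σ hK hdK hL₂ hL'‖ ≤
      d.bound * ‖L₁ - L₂‖ / (1 - d.bound * K) := by
  have hC₁ := contractingWith_conjugacyMap d σ hK hdK hL₁ hL'
  have hC₂ := contractingWith_conjugacyMap d σ hK hdK hL₂ hL'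
  rw [← dist_eq_norm]
  refine hC₁.dist_fixedPoint_fixedPoint_of_dist_le' _ hC₁.fixedPoint_isFixedPt
    hC₂.fixedPoint_isFixedPt fun h => ?_
  rw [dist_eq_norm, conjugacyMap, conjugacyMap, ← map_sub]
  exact (ContinuousLinearMap.le_opNorm _ _).trans (mul_le_mul (norm_greenOp_le d σ _)
    (norm_conjugacyDefect_sub_conjugacyDefect_le σ L₁ L₂ L' _ h) (norm_nonneg _) d.bound.2)

variable {L : ι → X →ᵇ X} (hL : ∀ j, LipschitzWith K (L j))

def conjugacyHomeomorph (hdK : d.bound * K < 1) (j : ι) : X ≃ₜ X where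
  toFun := idAdd (conjugacyCorrection d σ hK hdK hL lipschitzWith_zero_apply j)
  invFun := idAdd (conjugacyCorrection d σ hK hdK lipschitzWith_zero_apply hL j)
  left_inv := idAdd_conjugacyCorrection_idAdd_conjugacyCorrection d σ hK hdK _ hL j
  right_inv := idAdd_conjugacyCorrection_idAdd_conjugacyCorrection d σ hK hdK hL _ j
  continuous_toFun := (idAdd _).continuous
  continuous_invFun := (idAdd _).continuous

theorem conjugacyHomeomorph_apply (hdK : d.bound * K < 1) (j : ι) (x : X) :
    conjugacyHomeomorph d σ hK hL hdK j x =
      x + conjugacyCorrection d σ hK hdK hL lipschitzWith_zero_apply j x := rfl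

theorem perturb_comp_conjugacyHomeomorph (hdK : d.bound * K < 1) (j : ι) (x : X) :
    T (conjugacyHomeomorph d σ hK hL hdK (σ j) x) +
        L j (conjugacyHomeomorph d σ hK hL hdK (σ j) x) =
      conjugacyHomeomorph d σ hK hL hdK j (T x) := by
  simpa [perturbFamily, conjugacyHomeomorph_apply] using
    perturbFamily_idAdd_conjugacyCorrection d σ hK hdK hL lipschitzWith_zero_apply j x

theorem boundedMap_conjugacyHomeomorph_sub (hdK : d.bound * K < 1) (j : ι) :
    BoundedMap fun x => conjugacyHomeomorph d σ hK hL hdK j x - x :=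
  ⟨_, fun x => by
    simpa [conjugacyHomeomorph_apply] using
      (conjugacyCorrection d σ hK hdK hL lipschitzWith_zero_apply j).norm_coe_le_norm x⟩

theorem norm_conjugacyHomeomorph_sub_le (hdK : d.bound * K < 1) {L' : ι → X →ᵇ X}
    (hL' : ∀ j, LipschitzWith K (L' j)) (j : ι) (x : X) :
    ‖conjugacyHomeomorph d σ hK hL hdK j x - conjugacyHomeomorph d σ hK hL' hdK j x‖ ≤
      d.bound * ‖L - L'‖ / (1 - d.bound * K) := by
  set h := conjugacyCorrection d σ hK hdK hL lipschitzWith_zero_apply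
  set h' := conjugacyCorrection d σ hK hdK hL' lipschitzWith_zero_apply
  calc ‖conjugacyHomeomorph d σ hK hL hdK j x - conjugacyHomeomorph d σ hK hL' hdK j x‖
      = ‖(h - h') j x‖ := by
        rw [conjugacyHomeomorph_apply, conjugacyHomeomorph_apply, add_sub_add_left_eq_sub]; rfl
    _ ≤ ‖h - h'‖ := ((h - h') j).norm_coe_le_norm x |>.trans (norm_le_pi_norm (h - h') j)
    _ ≤ d.bound * ‖L - L'‖ / (1 - d.bound * K) :=
      norm_conjugacyCorrection_sub_le d σ hK hdK hL hL' lipschitzWith_zero_apply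

end Conjugacy

theorem compFamily_comp_eq_comp_iterate {X : Type*} (f : X → X) :
    ∀ {n : ℕ} (A : Fin n → X → X) (ϕ : ℕ → X → X),
      (∀ i : Fin n, A i ∘ ϕ (i + 1) = ϕ i ∘ f) → CompFamily n A ∘ ϕ n = ϕ 0 ∘ f^[n]
  | 0, _, _, _ => rfl
  | n + 1, A, ϕ, h => by
    have ih := compFamily_comp_eq_comp_iterate f (fun i => A i.succ) (fun k => ϕ (k + 1))
      fun i => h i.succ
    have hfold : CompFamily (n + 1) A = A 0 ∘ CompFamily n fun i => A i.succ := by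
      simp only [CompFamily, List.ofFn_succ, List.foldr_cons]
    have h0 : A 0 ∘ ϕ 1 = ϕ 0 ∘ f := h 0
    rw [hfold, Function.comp_assoc, ih, ← Function.comp_assoc, zero_add, h0,
      Function.iterate_succ']
    rfl

theorem compFamily_eq_conj {X : Type*} [TopologicalSpace X] {p : ℕ} (A : Fin (p + 1) → X → X)
    (f : X → X) (H : Fin (p + 1) → X ≃ₜ X) (hH : ∀ i x, A i (H (i + 1) x) = H i (f x)) (x : X) :
    CompFamily (p + 1) A x = H 0 (f^[p + 1] ((H 0).symm x)) := by
  open Fin.NatCast in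
  have := compFamily_comp_eq_comp_iterate f A (fun k => H (k : Fin (p + 1)))
    fun i => funext fun y => by simpa using hH i y
  simpa using congrFun this ((H 0).symm x)

def BoundedMap.toBoundedContinuousFunction {α E : Type*} [TopologicalSpace α]
    [SeminormedAddCommGroup E] {F : α → E} (hF : BoundedMap F) (hc : Continuous F) : α →ᵇ E :=
  .ofNormedAddCommGroup F hc hF.choose hF.choose_spec

theorem LipLt.lipschitzWith {α β : Type*} [PseudoEMetricSpace α] [PseudoEMetricSpace β]
    {F : α → β} {K : ℝ≥0} (h : LipLt F K) : LipschitzWith K F := by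
  obtain ⟨c, hc, hF⟩ := h
  exact hF.weaken (le_of_lt (by exact_mod_cast hc))

theorem norm_le_iSup_iSup_norm {ι α E : Type*} [Fintype ι] [TopologicalSpace α]
    [SeminormedAddCommGroup E] (g : ι → α →ᵇ E) : ‖g‖ ≤ ⨆ j, ⨆ y, ‖g j y‖ := by
  have hbdd : ∀ j, BddAbove (Set.range fun y => ‖g j y‖) := fun j =>
    ⟨‖g j‖, by rintro _ ⟨y, rfl⟩; exact (g j).norm_coe_le_norm y⟩
  have hnonneg : 0 ≤ ⨆ j, ⨆ y, ‖g j y‖ :=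
    Real.iSup_nonneg fun j => Real.iSup_nonneg fun y => norm_nonneg _
  refine (pi_norm_le_iff_of_nonneg hnonneg).mpr fun j => (norm_le hnonneg).mpr fun y => ?_
  exact (le_ciSup (hbdd j) y).trans (le_ciSup (Set.finite_range fun j => ⨆ y, ‖g j y‖).bddAbove j)

theorem mul_div_one_sub_mul_le {b k N D : ℝ} (hb : 0 ≤ b) (hbk : b * k ≤ 2⁻¹) (hN : 0 ≤ N)
    (hND : N ≤ D) : b * N / (1 - b * k) ≤ (2 * b + 1) * D := by
  rw [div_le_iff₀ (by linarith)]
  nlinarith [mul_le_mul_of_nonneg_left hND hb,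
    mul_nonneg (mul_nonneg (by positivity : 0 ≤ 2 * b + 1) (hN.trans hND))
      (by linarith : 0 ≤ 1 - b * k - 2⁻¹)]

/-- For a generalized hyperbolic operator `T` there are `ε > 0` and `C > 0`, independent of
`p`, and for each `p` an assignment `𝓛 ↦ h_𝓛` on the `p`-tuples of bounded Lipschitz maps
with `Lip(L_j) < ε`, such that `h_𝓛` is a homeomorphism at bounded distance from the identity
conjugating `(T+L₁)∘⋯∘(T+L_p)` and `T^p`, and
`‖h_𝓛 - h_𝓛'‖_∞ ≤ C · max_j ‖L_j - L'_j‖_∞`. -/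
theorem genHyperbolic_conjugacy_lipschitz_dependence
    {X : Type*} [NormedAddCommGroup X] [NormedSpace ℂ X] [CompleteSpace X]
    (T : X ≃L[ℂ] X) (hT : IsGenHyperbolic T) :
    ∃ ε > 0, ∃ C > (0 : ℝ), ∀ p : ℕ,
      ∃ H : (Fin (p + 1) → X → X) → (X ≃ₜ X),
        (∀ L : Fin (p + 1) → X → X,
          (∀ j, BoundedMap (L j)) → (∀ j, LipLt (L j) ε) →
          (∀ x : X, CompFamily (p + 1) (fun j y => T y + L j y) x =
              (H L) ((⇑T)^[p + 1] ((H L).symm x))) ∧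
          BoundedMap (fun x : X => H L x - x)) ∧
        (∀ L L' : Fin (p + 1) → X → X,
          (∀ j, BoundedMap (L j)) → (∀ j, LipLt (L j) ε) →
          (∀ j, BoundedMap (L' j)) → (∀ j, LipLt (L' j) ε) →
          ∀ x : X, ‖H L x - H L' x‖ ≤ C * ⨆ j, ⨆ y, ‖L j y - L' j y‖) := by
  classical
  obtain ⟨d⟩ := hT.nonempty_summableDichotomy
  obtain ⟨K, hK0, hK, hdK⟩ := d.exists_small_lipschitz_bound
  have hdK1 : d.bound * K < 1 := hdK.trans_lt (by norm_num)
  refine ⟨K, hK0, 2 * d.bound + 1, by positivity, fun p => ?_⟩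
  let Lb (L : Fin (p + 1) → X → X) (h : (∀ j, BoundedMap (L j)) ∧ ∀ j, LipLt (L j) K) :
      Fin (p + 1) → X →ᵇ X :=
    fun j => (h.1 j).toBoundedContinuousFunction (h.2 j).lipschitzWith.continuous
  have hLb L h : ∀ j, LipschitzWith K (Lb L h j) := fun j => (h.2 j).lipschitzWith
  refine ⟨fun L => if h : _ then conjugacyHomeomorph d (finRotate (p + 1)) hK (hLb L h) hdK1 0
    else .refl X, fun L hb hl => ?_, fun L L' hb hl hb' hl' x => ?_⟩
  · simp only [dif_pos (And.intro hb hl)]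
    refine ⟨compFamily_eq_conj _ _ _ fun i y => ?_, boundedMap_conjugacyHomeomorph_sub d _ hK _ _ 0⟩
    rw [← finRotate_apply]
    exact perturb_comp_conjugacyHomeomorph d _ hK _ hdK1 i y
  · simp only [dif_pos (And.intro hb hl), dif_pos (And.intro hb' hl')]
    exact (norm_conjugacyHomeomorph_sub_le d _ hK _ hdK1 _ 0 x).trans
      (mul_div_one_sub_mul_le d.bound.2 (by exact_mod_cast hdK) (norm_nonneg _)
        (norm_le_iSup_iSup_norm (Lb L ⟨hb, hl⟩ - Lb L' ⟨hb', hl'⟩)))
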